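/- arXiv:1802.08157 — 2 statements merged into one kernel-verified Lean document; each statement's English description precedes it below -/
import Mathlib

section
/- Let H : ℝ^{2d} → ℝ be twice continuously differentiable and consider the Hamiltonian system w' = J∇H(w). Let a_{ij}, b_i (1 ≤ i,j ≤ s) be Runge–Kutta coefficients satisfying the symplecticity condition b_i a_{ij} + b_j a_{ji} = b_i b_j for all i, j. Fix a step size Δt and suppose that on an open set U ⊆ ℝ^{2d} there are continuously differentiable maps u_1, …, u_s : U → ℝ^{2d} and Φ : U → ℝ^{2d} satisfying, for every w ∈ U, the stage equations u_i(w) = w + Δt Σ_{j=1}^s a_{ij} J∇H(u_j(w)) for i = 1,…,s, and Φ(w) = w + Δt Σ_{i=1}^s b_i J∇H(u_i(w)). Then Φ is symplectic, i.e. (DΦ(w))ᵀ J DΦ(w) = J for all w ∈ U. -/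
open Matrix

/-- The canonical symplectic matrix `J = [[0, I], [-I, 0]]` on `ℝ^{2d}`,
with coordinates indexed by `Fin d ⊕ Fin d` (first block: positions, second: momenta). -/
noncomputable def Jmat (d : ℕ) : Matrix (Fin d ⊕ Fin d) (Fin d ⊕ Fin d) ℝ :=
  Matrix.fromBlocks 0 1 (-1) 0

/-- The gradient of a scalar function on `ι → ℝ`, given by its partial derivatives. -/
noncomputable def grad {ι : Type*} [Fintype ι] [DecidableEq ι]
    (H : (ι → ℝ) → ℝ) (w : ι → ℝ) : ι → ℝ :=
  fun i => fderiv ℝ H w (Pi.single i 1)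

/-- The Jacobian matrix of a map `g : (ι → ℝ) → (ι → ℝ)` at a point `w`. -/
noncomputable def jacobian {ι : Type*} [Fintype ι] [DecidableEq ι]
    (g : (ι → ℝ) → (ι → ℝ)) (w : ι → ℝ) : Matrix ι ι ℝ :=
  Matrix.of fun i j => fderiv ℝ (fun x => g x i) w (Pi.single j 1)

/-!
Write `Fᵢ = Lᵢ Kᵢ`, where `Kᵢ = Duᵢ(w)` and `Lᵢ = Δt · J · ∇²H(uᵢ(w))`. Differentiating the stage
equations gives `Kᵢ = 1 + Σⱼ aᵢⱼ Fⱼ` and `DΦ(w) = 1 + Σᵢ bᵢ Fᵢ`. Since the Hessian is symmetric,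
each `Lᵢ` is skew-adjoint for `J`, i.e. `Lᵢᵀ J + J Lᵢ = 0`, so `Fᵢᵀ J Kᵢ + Kᵢᵀ J Fᵢ = 0`.
Substituting the stage equation for `Kᵢ` in this identity, the linear terms of `DΦᵀ J DΦ - J`
become `-Σᵢⱼ (bᵢ aᵢⱼ + bⱼ aⱼᵢ) Fᵢᵀ J Fⱼ`, which cancels the quadratic term `Σᵢⱼ bᵢ bⱼ Fᵢᵀ J Fⱼ`
exactly under the symplecticity condition.
-/

open Filter Topology

section Jacobian

variable {ι : Type*} [Fintype ι] [DecidableEq ι]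

theorem HasFDerivAt.jacobian_eq {g : (ι → ℝ) → ι → ℝ} {L : (ι → ℝ) →L[ℝ] ι → ℝ} {w : ι → ℝ}
    (hg : HasFDerivAt g L w) : jacobian g w = LinearMap.toMatrix' (L : (ι → ℝ) →ₗ[ℝ] ι → ℝ) := by
  ext i j
  rw [jacobian, of_apply, ((hasFDerivAt_pi'.1 hg) i).fderiv]
  rfl

theorem DifferentiableAt.jacobian_eq {g : (ι → ℝ) → ι → ℝ} {w : ι → ℝ}
    (hg : DifferentiableAt ℝ g w) :
    jacobian g w = LinearMap.toMatrix' (fderiv ℝ g w : (ι → ℝ) →ₗ[ℝ] ι → ℝ) :=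
  hg.hasFDerivAt.jacobian_eq

theorem HasFDerivAt.const_mulVec (A : Matrix ι ι ℝ) {g : (ι → ℝ) → ι → ℝ}
    {L : (ι → ℝ) →L[ℝ] ι → ℝ} {w : ι → ℝ} (hg : HasFDerivAt g L w) :
    HasFDerivAt (fun x => A *ᵥ g x) ((Matrix.toLin' A).toContinuousLinearMap.comp L) w :=
  (Matrix.toLin' A).toContinuousLinearMap.hasFDerivAt.comp w hg

theorem jacobian_const_mulVec (A : Matrix ι ι ℝ) {g : (ι → ℝ) → ι → ℝ} {w : ι → ℝ}
    (hg : DifferentiableAt ℝ g w) : jacobian (fun x => A *ᵥ g x) w = A * jacobian g w := by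
  rw [(hg.hasFDerivAt.const_mulVec A).jacobian_eq, hg.jacobian_eq,
    ContinuousLinearMap.toLinearMap_comp, LinearMap.toMatrix'_comp]
  congr 1
  exact LinearMap.toMatrix'_toLin' A

theorem jacobian_eq_of_eventuallyEq_add_smul_sum {σ : Type*} [Fintype σ]
    {f g : (ι → ℝ) → ι → ℝ} {u : σ → (ι → ℝ) → ι → ℝ} {w : ι → ℝ} (c : σ → ℝ) (Δt : ℝ)
    (hf : ∀ j, DifferentiableAt ℝ f (u j w)) (hu : ∀ j, DifferentiableAt ℝ (u j) w)
    (hg : g =ᶠ[𝓝 w] fun x => x + Δt • ∑ j, c j • f (u j x)) :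
    jacobian g w = 1 + ∑ j, c j • (Δt • jacobian f (u j w) * jacobian (u j) w) := by
  have hderiv : HasFDerivAt (fun x => x + Δt • ∑ j, c j • f (u j x))
      (ContinuousLinearMap.id ℝ _ + Δt • ∑ j, c j • (fderiv ℝ f (u j w)).comp (fderiv ℝ (u j) w))
      w :=
    (hasFDerivAt_id w).add <| .const_smul (.fun_sum fun j _ =>
      ((hf j).hasFDerivAt.comp w (hu j).hasFDerivAt).const_smul (c j)) Δt
  rw [(hderiv.congr_of_eventuallyEq hg).jacobian_eq]
  simp only [ContinuousLinearMap.toLinearMap_add, ContinuousLinearMap.toLinearMap_smul,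
    ContinuousLinearMap.toLinearMap_sum, ContinuousLinearMap.coe_id,
    ContinuousLinearMap.toLinearMap_comp, map_add, map_smul, map_sum, LinearMap.toMatrix'_id,
    LinearMap.toMatrix'_comp, ← (hf _).jacobian_eq, ← (hu _).jacobian_eq]
  rw [Finset.smul_sum]
  simp only [Matrix.smul_mul, smul_comm Δt]

theorem differentiableAt_grad {H : (ι → ℝ) → ℝ} {y : ι → ℝ} (hH : ContDiffAt ℝ 2 H y) :
    DifferentiableAt ℝ (grad H) y := by
  have hD : DifferentiableAt ℝ (fderiv ℝ H) y :=
    (hH.fderiv_right (m := 1) le_rfl).differentiableAt one_ne_zero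
  exact differentiableAt_pi.2 fun i => hD.clm_apply (differentiableAt_const _)

theorem isSymm_jacobian_grad {H : (ι → ℝ) → ℝ} {y : ι → ℝ} (hH : ContDiffAt ℝ 2 H y) :
    (jacobian (grad H) y).IsSymm := by
  have hD : DifferentiableAt ℝ (fderiv ℝ H) y :=
    (hH.fderiv_right (m := 1) le_rfl).differentiableAt one_ne_zero
  have hentry : ∀ i j,
      jacobian (grad H) y i j = fderiv ℝ (fderiv ℝ H) y (Pi.single j 1) (Pi.single i 1) := by
    intro i j
    simp only [jacobian, grad, of_apply]
    rw [fderiv_clm_apply hD (differentiableAt_const _)]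
    simp
  refine Matrix.IsSymm.ext fun i j => ?_
  rw [hentry, hentry]
  exact hH.isSymmSndFDerivAt (by simp) _ _

end Jacobian

theorem Matrix.transpose_mul_add_mul_eq_of_rk_stage {R ι σ : Type*} [CommRing R] [Fintype ι]
    [DecidableEq ι] [Fintype σ] {Ω L K : Matrix ι ι R} (a : σ → R) (F : σ → Matrix ι ι R)
    (hL : Ω.IsSkewAdjoint L) (hK : K = 1 + ∑ j, a j • F j) :
    (L * K)ᵀ * Ω + Ω * (L * K) = -∑ j, a j • ((L * K)ᵀ * Ω * F j + (F j)ᵀ * Ω * (L * K)) := by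
  have hzero : (L * K)ᵀ * Ω * K + Kᵀ * Ω * (L * K) = 0 := by
    calc (L * K)ᵀ * Ω * K + Kᵀ * Ω * (L * K) = Kᵀ * (Lᵀ * Ω - Ω * (-L)) * K := by
          rw [transpose_mul]; noncomm_ring
      _ = 0 := by rw [hL, sub_self, Matrix.mul_zero, Matrix.zero_mul]
  set F₀ := L * K
  rw [hK] at hzero
  simp only [transpose_add, transpose_one, transpose_sum, transpose_smul, Matrix.mul_add,
    Matrix.add_mul, Matrix.mul_one, Matrix.one_mul, Matrix.mul_sum, Matrix.sum_mul,
    Matrix.mul_smul, Matrix.smul_mul] at hzero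
  rw [eq_neg_iff_add_eq_zero, ← hzero]
  simp only [smul_add, Finset.sum_add_distrib, Matrix.mul_assoc]
  abel

theorem Matrix.transpose_mul_mul_eq_of_rk_stages {R ι σ : Type*} [CommRing R] [Fintype ι]
    [DecidableEq ι] [Fintype σ] (Ω : Matrix ι ι R) (a : σ → σ → R) (b : σ → R)
    (hsymp : ∀ i j, b i * a i j + b j * a j i = b i * b j)
    (L K : σ → Matrix ι ι R) (hL : ∀ i, Ω.IsSkewAdjoint (L i))
    (hK : ∀ i, K i = 1 + ∑ j, a i j • (L j * K j)) :
    (1 + ∑ i, b i • (L i * K i))ᵀ * Ω * (1 + ∑ i, b i • (L i * K i)) = Ω := by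
  set F : σ → Matrix ι ι R := fun i => L i * K i
  set Q : σ → σ → Matrix ι ι R := fun i j => (F i)ᵀ * Ω * F j
  have hcross : ∀ i, (F i)ᵀ * Ω + Ω * F i = -∑ j, a i j • (Q i j + Q j i) := fun i =>
    transpose_mul_add_mul_eq_of_rk_stage (a i) F (hL i) (hK i)
  have hquad : ∑ i, b i • ∑ j, a i j • (Q i j + Q j i) = ∑ i, ∑ j, (b i * b j) • Q i j := by
    simp only [Finset.smul_sum, smul_add, smul_smul, Finset.sum_add_distrib]
    rw [Finset.sum_comm (f := fun i j => (b i * a i j) • Q j i), ← Finset.sum_add_distrib]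
    refine Finset.sum_congr rfl fun i _ => ?_
    rw [← Finset.sum_add_distrib]
    exact Finset.sum_congr rfl fun j _ => by rw [← add_smul, hsymp]
  set A := ∑ i, b i • F i
  have hlin : Aᵀ * Ω + Ω * A = ∑ i, b i • ((F i)ᵀ * Ω + Ω * F i) := by
    simp only [A, transpose_sum, transpose_smul, Matrix.sum_mul, Matrix.mul_sum, smul_add,
      Finset.sum_add_distrib, Matrix.smul_mul, Matrix.mul_smul]
  have hquad' : Aᵀ * Ω * A = ∑ i, ∑ j, (b i * b j) • Q i j := by
    rw [transpose_sum, Finset.sum_mul, Finset.sum_mul]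
    refine Finset.sum_congr rfl fun i _ => ?_
    rw [transpose_smul, Matrix.smul_mul, Matrix.smul_mul, Matrix.mul_sum, Finset.smul_sum]
    exact Finset.sum_congr rfl fun j _ => by rw [Matrix.mul_smul, smul_smul]
  calc (1 + A)ᵀ * Ω * (1 + A) = Ω + (Aᵀ * Ω + Ω * A) + Aᵀ * Ω * A := by
        rw [transpose_add, transpose_one]; noncomm_ring
    _ = Ω := by
        simp only [hlin, hcross, smul_neg, Finset.sum_neg_distrib, hquad, hquad']
        abel

theorem Matrix.isSkewAdjoint_mul_of_isSymm {R ι : Type*} [CommRing R] [Fintype ι] [DecidableEq ι]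
    {J S : Matrix ι ι R} (hJ : Jᵀ = -J) (hJJ : J * J = -1) (hS : S.IsSymm) :
    J.IsSkewAdjoint (J * S) := by
  rw [Matrix.IsSkewAdjoint, Matrix.IsAdjointPair, transpose_mul, hS.eq, hJ, Matrix.mul_neg,
    Matrix.mul_neg, Matrix.neg_mul, Matrix.mul_assoc, ← Matrix.mul_assoc J, hJJ]
  simp

theorem Jmat_eq_neg_J (d : ℕ) : Jmat d = -Matrix.J (Fin d) ℝ := by
  rw [Jmat, Matrix.J, fromBlocks_neg, neg_zero, neg_neg]

theorem Jmat_transpose (d : ℕ) : (Jmat d)ᵀ = -Jmat d := by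
  rw [Jmat_eq_neg_J, transpose_neg, J_transpose]

theorem Jmat_mul_self (d : ℕ) : Jmat d * Jmat d = -1 := by
  rw [Jmat_eq_neg_J, neg_mul_neg, J_squared]

theorem differentiableAt_hamiltonian_field {d : ℕ} {H : (Fin d ⊕ Fin d → ℝ) → ℝ}
    {y : Fin d ⊕ Fin d → ℝ} (hH : ContDiffAt ℝ 2 H y) :
    DifferentiableAt ℝ (fun x => Jmat d *ᵥ grad H x) y :=
  ((differentiableAt_grad hH).hasFDerivAt.const_mulVec _).differentiableAt

theorem isSkewAdjoint_jacobian_hamiltonian_field {d : ℕ} {H : (Fin d ⊕ Fin d → ℝ) → ℝ}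
    {y : Fin d ⊕ Fin d → ℝ} (hH : ContDiffAt ℝ 2 H y) :
    (Jmat d).IsSkewAdjoint (jacobian (fun x => Jmat d *ᵥ grad H x) y) := by
  rw [jacobian_const_mulVec _ (differentiableAt_grad hH)]
  exact isSkewAdjoint_mul_of_isSymm (Jmat_transpose d) (Jmat_mul_self d) (isSymm_jacobian_grad hH)

theorem symplectic_RK_step_is_symplectic_general
    (d s : ℕ) (H : ((Fin d ⊕ Fin d) → ℝ) → ℝ) (hH : ContDiff ℝ 2 H)
    (a : Fin s → Fin s → ℝ) (b : Fin s → ℝ)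
    (hsymp : ∀ i j, b i * a i j + b j * a j i = b i * b j)
    (Δt : ℝ) (U : Set ((Fin d ⊕ Fin d) → ℝ)) (hU : IsOpen U)
    (u : Fin s → ((Fin d ⊕ Fin d) → ℝ) → ((Fin d ⊕ Fin d) → ℝ))
    (Φ : ((Fin d ⊕ Fin d) → ℝ) → ((Fin d ⊕ Fin d) → ℝ))
    (hu : ∀ i, ContDiffOn ℝ 1 (u i) U)
    (hstage : ∀ w ∈ U, ∀ i, u i w =
      w + Δt • ∑ j, a i j • (Jmat d).mulVec (grad H (u j w)))
    (hstep : ∀ w ∈ U, Φ w =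
      w + Δt • ∑ i, b i • (Jmat d).mulVec (grad H (u i w))) :
    ∀ w ∈ U, (jacobian Φ w)ᵀ * Jmat d * jacobian Φ w = Jmat d := by
  intro w hw
  have hU_nhds : U ∈ 𝓝 w := hU.mem_nhds hw
  have hfield : ∀ j, DifferentiableAt ℝ (fun x => Jmat d *ᵥ grad H x) (u j w) :=
    fun j => differentiableAt_hamiltonian_field hH.contDiffAt
  have hu_diff : ∀ j, DifferentiableAt ℝ (u j) w :=
    fun j => ((hu j).differentiableOn one_ne_zero).differentiableAt hU_nhds
  have hK : ∀ i, jacobian (u i) w = 1 + ∑ j, a i j •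
      (Δt • jacobian (fun x => Jmat d *ᵥ grad H x) (u j w) * jacobian (u j) w) := fun i =>
    jacobian_eq_of_eventuallyEq_add_smul_sum _ Δt hfield hu_diff
      (eventually_of_mem hU_nhds fun x hx => hstage x hx i)
  rw [jacobian_eq_of_eventuallyEq_add_smul_sum b Δt hfield hu_diff
    (eventually_of_mem hU_nhds hstep)]
  refine transpose_mul_mul_eq_of_rk_stages _ a b hsymp _ _ (fun j => ?_) hK
  rw [← mem_skewAdjointMatricesSubmodule]
  exact Submodule.smul_mem _ Δt <| (mem_skewAdjointMatricesSubmodule _ _).2 <|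
    isSkewAdjoint_jacobian_hamiltonian_field hH.contDiffAt

/-- A Runge–Kutta method whose coefficients satisfy the symplecticity condition
`bᵢ aᵢⱼ + bⱼ aⱼᵢ = bᵢ bⱼ` produces a symplectic one-step map for the Hamiltonian
system `w' = J ∇H(w)`. -/
theorem symplectic_RK_step_is_symplectic
    (d s : ℕ) (H : ((Fin d ⊕ Fin d) → ℝ) → ℝ) (hH : ContDiff ℝ 2 H)
    (a : Fin s → Fin s → ℝ) (b : Fin s → ℝ)
    (hsymp : ∀ i j, b i * a i j + b j * a j i = b i * b j)
    (Δt : ℝ) (U : Set ((Fin d ⊕ Fin d) → ℝ)) (hU : IsOpen U)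
    (u : Fin s → ((Fin d ⊕ Fin d) → ℝ) → ((Fin d ⊕ Fin d) → ℝ))
    (Φ : ((Fin d ⊕ Fin d) → ℝ) → ((Fin d ⊕ Fin d) → ℝ))
    (hu : ∀ i, ContDiffOn ℝ 1 (u i) U)
    (hΦ : ContDiffOn ℝ 1 Φ U)
    (hstage : ∀ w ∈ U, ∀ i, u i w =
      w + Δt • ∑ j, a i j • (Jmat d).mulVec (grad H (u j w)))
    (hstep : ∀ w ∈ U, Φ w =
      w + Δt • ∑ i, b i • (Jmat d).mulVec (grad H (u i w))) :
    ∀ w ∈ U, (jacobian Φ w)ᵀ * Jmat d * jacobian Φ w = Jmat d :=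
  symplectic_RK_step_is_symplectic_general d s H hH a b hsymp Δt U hU u Φ hu hstage hstep
end

section
/- Let m ≥ 1 and L ≥ 0 be integers, let P : ℝ² → ℝ be a homogeneous polynomial of degree m that is harmonic in the plane (∂²P/∂x² + ∂²P/∂y² = 0), and let C : ℝ → ℝ be of class C^{2L+2}. Define u : ℝ³ → ℝ by u(x,y,z) = Σ_{ℓ=0}^{L} (−1)^ℓ (m!/(2^{2ℓ} ℓ! (ℓ+m)!)) C^{(2ℓ)}(z) (x² + y²)^ℓ P(x,y). Then the Laplacian of u satisfies Δu(x,y,z) = (−1)^L (m!/(2^{2L} L! (L+m)!)) C^{(2L+2)}(z) (x² + y²)^L P(x,y); in particular the truncated cylindrical-harmonic expansion of the magnetic scalar potential fails to be harmonic only by a term proportional to the first neglected generalized-gradient derivative C^{(2L+2)}. -/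
/-- The truncated generalized-gradient expansion
`u(x,y,z) = ∑_{ℓ=0}^{L} (-1)^ℓ (m!/(2^{2ℓ} ℓ! (ℓ+m)!)) C^{(2ℓ)}(z) (x²+y²)^ℓ P(x,y)`. -/
noncomputable def truncPotential (m L : ℕ) (C : ℝ → ℝ) (P : MvPolynomial (Fin 2) ℝ)
    (x y z : ℝ) : ℝ :=
  ∑ ℓ ∈ Finset.range (L + 1),
    (-1 : ℝ) ^ ℓ *
      ((Nat.factorial m : ℝ) /
        ((2:ℝ) ^ (2*ℓ) * (Nat.factorial ℓ : ℝ) * (Nat.factorial (ℓ + m) : ℝ))) *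
      iteratedDeriv (2*ℓ) C z * (x^2 + y^2) ^ ℓ * MvPolynomial.eval ![x, y] P

/-! With `r² = x² + y²`, Euler's identity for the homogeneous harmonic polynomial `P` gives
`Δ_{xy} (r^{2ℓ+2} P) = 4 (ℓ+1)(ℓ+1+m) r^{2ℓ} P`, and the coefficients `a_ℓ` of the expansion
satisfy `4 (ℓ+1)(ℓ+1+m) a_{ℓ+1} = -a_ℓ`. Hence the horizontal Laplacian of the `(ℓ+1)`-st term
cancels `∂_z²` of the `ℓ`-th term, and only `∂_z²` of the last term, which carries
`C^{(2L+2)}`, survives. -/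

open Finset

namespace MvPolynomial

section Calculus

variable {𝕜 σ : Type*} [NontriviallyNormedField 𝕜] [DecidableEq σ]

lemma hasDerivAt_eval_update (Q : MvPolynomial σ 𝕜) (v : σ → 𝕜) (i : σ) (t : 𝕜) :
    HasDerivAt (fun s => eval (Function.update v i s) Q)
      (eval (Function.update v i t) (pderiv i Q)) t := by
  induction Q using MvPolynomial.induction_on with
  | C a => simpa using hasDerivAt_const t a
  | add p q hp hq => simpa using hp.fun_add hq
  | mul_X p j hp =>
    rcases eq_or_ne j i with rfl | hji
    · simpa [pderiv_mul, mul_comm, add_comm] using hp.fun_mul (hasDerivAt_id' t)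
    · simpa [pderiv_mul, pderiv_X_of_ne hji, Function.update_of_ne hji, mul_comm] using
        hp.mul_const (v j)

lemma deriv_eval_update (Q : MvPolynomial σ 𝕜) (v : σ → 𝕜) (i : σ) :
    deriv (fun s => eval (Function.update v i s) Q) =
      fun t => eval (Function.update v i t) (pderiv i Q) := by
  funext t
  exact (hasDerivAt_eval_update Q v i t).deriv

lemma iteratedDeriv_two_eval_update (Q : MvPolynomial σ 𝕜) (v : σ → 𝕜) (i : σ) (t : 𝕜) :
    iteratedDeriv 2 (fun s => eval (Function.update v i s) Q) t =
      eval (Function.update v i t) (pderiv i (pderiv i Q)) := by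
  rw [iteratedDeriv_succ, iteratedDeriv_one, deriv_eval_update, deriv_eval_update]

end Calculus

variable {R σ : Type*} [CommSemiring R] [Fintype σ]

noncomputable def laplacian : MvPolynomial σ R →ₗ[R] MvPolynomial σ R :=
  ∑ i, (pderiv i).toLinearMap ∘ₗ (pderiv i).toLinearMap

lemma laplacian_apply (Q : MvPolynomial σ R) :
    laplacian Q = ∑ i, pderiv i (pderiv i Q) := by
  simp [laplacian]

lemma pderiv_sum_X_sq (j : σ) : pderiv j (∑ i, X i ^ 2 : MvPolynomial σ R) = 2 • X j := by
  classical
  simp [pderiv_X, Pi.single_apply]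

lemma laplacian_sum_X_sq_mul (Q : MvPolynomial σ R) :
    laplacian ((∑ i, X i ^ 2) * Q) =
      (2 * Fintype.card σ) • Q + 4 • ∑ i, X i * pderiv i Q + (∑ i, X i ^ 2) * laplacian Q := by
  have h : ∀ j, pderiv j (pderiv j ((∑ i, X i ^ 2) * Q)) =
      2 • Q + 4 • (X j * pderiv j Q) + (∑ i, X i ^ 2) * pderiv j (pderiv j Q) := fun j => by
    simp only [pderiv_mul, pderiv_sum_X_sq, map_add, map_nsmul, pderiv_X_self, smul_mul_assoc,
      one_mul]
    abel
  simp only [laplacian_apply, h, sum_add_distrib, ← smul_sum, mul_sum, sum_const, card_univ,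
    smul_smul]

lemma IsHomogeneous.laplacian_sum_X_sq_mul {Q : MvPolynomial σ R} {d : ℕ}
    (hQ : Q.IsHomogeneous d) :
    laplacian ((∑ i, X i ^ 2) * Q) =
      (2 * Fintype.card σ + 4 * d) • Q + (∑ i, X i ^ 2) * laplacian Q := by
  rw [MvPolynomial.laplacian_sum_X_sq_mul, hQ.sum_X_mul_pderiv, smul_smul, ← add_smul]

lemma isHomogeneous_sum_X_sq : (∑ i, X i ^ 2 : MvPolynomial σ R).IsHomogeneous 2 :=
  IsHomogeneous.sum _ _ _ fun i _ => (isHomogeneous_X R i).pow 2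

lemma IsHomogeneous.laplacian_sum_X_sq_pow_mul {P : MvPolynomial σ R} {m : ℕ}
    (hP : P.IsHomogeneous m) (hΔ : laplacian P = 0) (k : ℕ) :
    laplacian ((∑ i, X i ^ 2) ^ (k + 1) * P) =
      (2 * (k + 1) * (2 * k + 2 * m + Fintype.card σ)) • ((∑ i, X i ^ 2) ^ k * P) := by
  induction k with
  | zero =>
    rw [zero_add, pow_one, pow_zero, one_mul, hP.laplacian_sum_X_sq_mul, hΔ, mul_zero, add_zero]
    congr 1
    ring
  | succ k ih =>
    have hQ := (isHomogeneous_sum_X_sq.pow (k + 1)).mul hP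
    rw [pow_succ', mul_assoc, hQ.laplacian_sum_X_sq_mul, ih, mul_smul_comm, ← mul_assoc,
      ← pow_succ', ← add_smul]
    congr 1
    ring

lemma IsHomogeneous.laplacian_sum_smul_sum_X_sq_pow_mul {P : MvPolynomial σ R} {m : ℕ}
    (hP : P.IsHomogeneous m) (hΔ : laplacian P = 0) (c : ℕ → R) (L : ℕ) :
    laplacian (∑ ℓ ∈ range (L + 1), c ℓ • ((∑ i, X i ^ 2) ^ ℓ * P)) =
      ∑ ℓ ∈ range L, (c (ℓ + 1) * (2 * (ℓ + 1) * (2 * ℓ + 2 * m + Fintype.card σ) : ℕ)) •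
        ((∑ i, X i ^ 2) ^ ℓ * P) := by
  rw [map_sum, sum_range_succ', pow_zero, one_mul, map_smul, hΔ, smul_zero, add_zero]
  refine sum_congr rfl fun ℓ _ => ?_
  rw [map_smul, hP.laplacian_sum_X_sq_pow_mul hΔ, ← Nat.cast_smul_eq_nsmul R, smul_smul]

lemma sum_iteratedDeriv_two_eval_update {𝕜 : Type*} [NontriviallyNormedField 𝕜]
    [DecidableEq σ] (Q : MvPolynomial σ 𝕜) (v : σ → 𝕜) :
    ∑ i, iteratedDeriv 2 (fun s => eval (Function.update v i s) Q) (v i) =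
      eval v (laplacian Q) := by
  simp [iteratedDeriv_two_eval_update, laplacian_apply]

lemma eval_sum_X_sq_fin_two (x y : R) : eval ![x, y] (∑ i, X i ^ 2) = x ^ 2 + y ^ 2 := by
  simp [Fin.sum_univ_two]

end MvPolynomial

open MvPolynomial

lemma iteratedDeriv_iteratedDeriv {𝕜 F : Type*} [NontriviallyNormedField 𝕜]
    [NormedAddCommGroup F] [NormedSpace 𝕜 F] (n k : ℕ) (f : 𝕜 → F) :
    iteratedDeriv n (iteratedDeriv k f) = iteratedDeriv (n + k) f := by
  simp only [iteratedDeriv_eq_iterate, Function.iterate_add_apply]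

lemma ContDiff.contDiff_iteratedDeriv {𝕜 F : Type*} [NontriviallyNormedField 𝕜]
    [NormedAddCommGroup F] [NormedSpace 𝕜 F] {f : 𝕜 → F} {N : ℕ} (hf : ContDiff 𝕜 N f)
    {n k : ℕ} (h : n + k ≤ N) : ContDiff 𝕜 n (iteratedDeriv k f) := by
  rw [iteratedDeriv_eq_iterate]
  exact ContDiff.iterate_deriv' n k (hf.of_le (by exact_mod_cast h))

noncomputable def expansionCoeff (m ℓ : ℕ) : ℝ :=
  (-1 : ℝ) ^ ℓ * ((m.factorial : ℝ) / ((2 : ℝ) ^ (2 * ℓ) * ℓ.factorial * (ℓ + m).factorial))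

lemma expansionCoeff_succ_mul (m ℓ : ℕ) :
    expansionCoeff m (ℓ + 1) * (4 * (ℓ + 1) * (ℓ + 1 + m)) = -expansionCoeff m ℓ := by
  have hf : ((ℓ + 1 + m).factorial : ℝ) = (ℓ + 1 + m) * (ℓ + m).factorial := by
    rw [add_right_comm, Nat.factorial_succ]; push_cast; ring
  simp only [expansionCoeff, Nat.factorial_succ, hf]
  push_cast
  field_simp
  ring

lemma truncPotential_eq_sum (m L : ℕ) (C : ℝ → ℝ) (P : MvPolynomial (Fin 2) ℝ) (x y z : ℝ) :
    truncPotential m L C P x y z = ∑ ℓ ∈ range (L + 1),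
      expansionCoeff m ℓ * iteratedDeriv (2 * ℓ) C z * (x ^ 2 + y ^ 2) ^ ℓ *
        eval ![x, y] P := rfl

lemma truncPotential_eq_eval (m L : ℕ) (C : ℝ → ℝ) (P : MvPolynomial (Fin 2) ℝ) (x y z : ℝ) :
    truncPotential m L C P x y z = eval ![x, y] (∑ ℓ ∈ range (L + 1),
      (expansionCoeff m ℓ * iteratedDeriv (2 * ℓ) C z) • ((∑ i, X i ^ 2) ^ ℓ * P)) := by
  rw [truncPotential_eq_sum, map_sum]
  simp only [smul_eval, eval_mul, eval_pow, eval_sum_X_sq_fin_two, mul_assoc]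

lemma laplacian_xy_truncPotential {m : ℕ} (L : ℕ) (C : ℝ → ℝ)
    {P : MvPolynomial (Fin 2) ℝ} (hP : P.IsHomogeneous m)
    (hΔ : laplacian P = 0) (x y z : ℝ) :
    iteratedDeriv 2 (fun t => truncPotential m L C P t y z) x
      + iteratedDeriv 2 (fun t => truncPotential m L C P x t z) y
    = -∑ ℓ ∈ range L, expansionCoeff m ℓ * iteratedDeriv (2 * ℓ + 2) C z * (x ^ 2 + y ^ 2) ^ ℓ *
        eval ![x, y] P := by
  have hx : ∀ s, Function.update ![x, y] 0 s = ![s, y] := fun s => by simp [Function.update_eq_iff]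
  have hy : ∀ s, Function.update ![x, y] 1 s = ![x, s] := fun s => by simp [Function.update_eq_iff]
  have hlap := sum_iteratedDeriv_two_eval_update (∑ ℓ ∈ range (L + 1),
      (expansionCoeff m ℓ * iteratedDeriv (2 * ℓ) C z) • ((∑ i, X i ^ 2) ^ ℓ * P)) ![x, y]
  rw [Fin.sum_univ_two] at hlap
  simp only [hx, hy, Matrix.cons_val_zero, Matrix.cons_val_one] at hlap
  simp only [truncPotential_eq_eval]
  rw [hlap, hP.laplacian_sum_smul_sum_X_sq_pow_mul hΔ, map_sum, ← sum_neg_distrib]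
  refine sum_congr rfl fun ℓ _ => ?_
  simp only [smul_eval, eval_mul, eval_pow, eval_sum_X_sq_fin_two, Fintype.card_fin, mul_add,
    mul_one]
  push_cast
  linear_combination (iteratedDeriv (2 * ℓ + 2) C z * (x ^ 2 + y ^ 2) ^ ℓ *
    eval ![x, y] P) * expansionCoeff_succ_mul m ℓ

lemma iteratedDeriv_two_z_truncPotential {m L : ℕ} {C : ℝ → ℝ}
    (hC : ContDiff ℝ (2 * L + 2 : ℕ) C) (P : MvPolynomial (Fin 2) ℝ) (x y z : ℝ) :
    iteratedDeriv 2 (fun t => truncPotential m L C P x y t) z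
    = ∑ ℓ ∈ range (L + 1), expansionCoeff m ℓ * iteratedDeriv (2 * ℓ + 2) C z *
        (x ^ 2 + y ^ 2) ^ ℓ * eval ![x, y] P := by
  simp only [truncPotential_eq_sum]
  rw [iteratedDeriv_fun_sum fun ℓ hℓ => ?_]
  · refine sum_congr rfl fun ℓ _ => ?_
    rw [iteratedDeriv_mul_const_field, iteratedDeriv_mul_const_field, iteratedDeriv_const_mul_field,
      iteratedDeriv_iteratedDeriv, add_comm]
  · have := hC.contDiff_iteratedDeriv (n := 2) (k := 2 * ℓ) (by rw [mem_range] at hℓ; omega)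
    fun_prop

theorem laplacian_of_truncated_expansion_general
    (m L : ℕ) (C : ℝ → ℝ)
    (hC : ContDiff ℝ ((2*L+2 : ℕ) : ℕ∞) C)
    (P : MvPolynomial (Fin 2) ℝ) (hP : P.IsHomogeneous m)
    (hharm : (MvPolynomial.pderiv (0 : Fin 2)) ((MvPolynomial.pderiv (0 : Fin 2)) P)
      + (MvPolynomial.pderiv (1 : Fin 2)) ((MvPolynomial.pderiv (1 : Fin 2)) P) = 0)
    (x y z : ℝ) :
    iteratedDeriv 2 (fun t => truncPotential m L C P t y z) x
      + iteratedDeriv 2 (fun t => truncPotential m L C P x t z) y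
      + iteratedDeriv 2 (fun t => truncPotential m L C P x y t) z
    = (-1 : ℝ) ^ L *
        ((Nat.factorial m : ℝ) /
          ((2:ℝ) ^ (2*L) * (Nat.factorial L : ℝ) * (Nat.factorial (L + m) : ℝ))) *
        iteratedDeriv (2*L+2) C z * (x^2 + y^2) ^ L * MvPolynomial.eval ![x, y] P := by
  have hΔ : laplacian P = 0 := by
    rwa [laplacian_apply, Fin.sum_univ_two]
  rw [laplacian_xy_truncPotential L C hP hΔ,
    iteratedDeriv_two_z_truncPotential hC, sum_range_succ, neg_add_cancel_left]
  rfl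

/-- If `P` is a harmonic homogeneous polynomial of degree `m ≥ 1` in the plane and
`C` is of class `C^{2L+2}`, then the Laplacian of the truncated expansion `u` equals
`(-1)^L (m!/(2^{2L} L! (L+m)!)) C^{(2L+2)}(z) (x²+y²)^L P(x,y)`: the truncation fails
to be harmonic only by a term proportional to the first neglected derivative. -/
theorem laplacian_of_truncated_expansion
    (m L : ℕ) (hm : 1 ≤ m) (C : ℝ → ℝ)
    (hC : ContDiff ℝ ((2*L+2 : ℕ) : ℕ∞) C)
    (P : MvPolynomial (Fin 2) ℝ) (hP : P.IsHomogeneous m)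
    (hharm : (MvPolynomial.pderiv (0 : Fin 2)) ((MvPolynomial.pderiv (0 : Fin 2)) P)
      + (MvPolynomial.pderiv (1 : Fin 2)) ((MvPolynomial.pderiv (1 : Fin 2)) P) = 0)
    (x y z : ℝ) :
    iteratedDeriv 2 (fun t => truncPotential m L C P t y z) x
      + iteratedDeriv 2 (fun t => truncPotential m L C P x t z) y
      + iteratedDeriv 2 (fun t => truncPotential m L C P x y t) z
    = (-1 : ℝ) ^ L *
        ((Nat.factorial m : ℝ) /
          ((2:ℝ) ^ (2*L) * (Nat.factorial L : ℝ) * (Nat.factorial (L + m) : ℝ))) *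
        iteratedDeriv (2*L+2) C z * (x^2 + y^2) ^ L * MvPolynomial.eval ![x, y] P :=
  laplacian_of_truncated_expansion_general m L C hC P hP hharm x y z
end
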